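/- arXiv:2210.16717 — 4 statements merged into one kernel-verified Lean document; each statement's English description precedes it below -/
import Mathlib

section
/- For every integer k ≥ 4 and any two distinct roots α, β of the k-generalized Fibonacci polynomial f_k in ℂ, one has |α − β| > 1/(k^(6.6) · (π/e)^k). -/
/-!
Every root `z` of `f_k` satisfies `z ^ k * (2 - z) = 1`, since
`(X - 1) * f_k = X ^ (k + 1) - 2 X ^ k + 1`. Writing `g z = z ^ k * (2 - z)`, the divided
difference `(g α - g β) / (α - β)` of two distinct roots vanishes, and it differs from
`g' β = β ^ (k - 1) * (2k - (k + 1) β)` by at most `4 k² M ^ (k - 1) ‖α - β‖` whenever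
`1 ≤ M` bounds `‖α‖` and `‖β‖`. On the other hand `‖g' β‖ ≥ max 1 ‖β‖ ^ (k - 1)`: a root in the
unit disc has `‖β‖ ^ k ≥ 1/3` and `‖2k - (k + 1) β‖ ≥ k - 1`, while a root outside it has
`‖β‖ ≥ 3/2`, hence `‖2 - β‖ = ‖β‖ ^ (-k) < 1/(k + 1)`, so `β` stays away from the critical point
`2k/(k + 1)` of `g`. Taking `‖α‖ ≤ ‖β‖` and `M = max 1 ‖β‖` gives `‖α - β‖ ≥ 1/(4k²)`, which
dominates the claimed bound.
-/

open Polynomial Real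

/-- The `k`-generalized Fibonacci polynomial `f_k(X) = X^k - X^(k-1) - ⋯ - X - 1`,
viewed as a polynomial over `ℂ`. -/
noncomputable def fibPoly (k : ℕ) : Polynomial ℂ :=
  X ^ k - ∑ i ∈ Finset.range k, X ^ i

open Finset

section GeomSum

variable {R : Type*} [NormedCommRing R] [NormOneClass R] {x y : R} {M : ℝ}

theorem norm_geom_sum₂_le (hx : ‖x‖ ≤ M) (hy : ‖y‖ ≤ M) (n : ℕ) :
    ‖∑ i ∈ range n, x ^ i * y ^ (n - 1 - i)‖ ≤ n * M ^ (n - 1) := by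
  have hM : 0 ≤ M := (norm_nonneg x).trans hx
  calc ‖∑ i ∈ range n, x ^ i * y ^ (n - 1 - i)‖ ≤ ∑ _i ∈ range n, M ^ (n - 1) := by
        refine norm_sum_le_of_le _ fun i hi => ?_
        calc ‖x ^ i * y ^ (n - 1 - i)‖ ≤ ‖x‖ ^ i * ‖y‖ ^ (n - 1 - i) :=
              (norm_mul_le _ _).trans (mul_le_mul (norm_pow_le _ _) (norm_pow_le _ _)
                (norm_nonneg _) (by positivity))
          _ ≤ M ^ i * M ^ (n - 1 - i) := by gcongr
          _ = M ^ (n - 1) := by rw [← pow_add]; congr 1; have := mem_range.mp hi; omega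
    _ = n * M ^ (n - 1) := by simp

theorem norm_geom_sum₂_sub_le (hx : ‖x‖ ≤ M) (hy : ‖y‖ ≤ M) (n : ℕ) :
    ‖∑ i ∈ range n, x ^ i * y ^ (n - 1 - i) - n * y ^ (n - 1)‖ ≤
      ‖x - y‖ * (n ^ 2 * M ^ (n - 2)) := by
  have hM : 0 ≤ M := (norm_nonneg x).trans hx
  have hsplit : ∑ i ∈ range n, x ^ i * y ^ (n - 1 - i) - n * y ^ (n - 1) =
      ∑ i ∈ range n, (x - y) * (∑ j ∈ range i, x ^ j * y ^ (i - 1 - j)) * y ^ (n - 1 - i) := by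
    have hconst : (n : R) * y ^ (n - 1) = ∑ _i ∈ range n, y ^ (n - 1) := by simp
    rw [hconst, ← sum_sub_distrib]
    refine sum_congr rfl fun i hi => ?_
    rw [mul_comm (x - y), geom_sum₂_mul, sub_mul, ← pow_add]
    congr 2; have := mem_range.mp hi; omega
  rw [hsplit]
  calc _ ≤ ∑ _i ∈ range n, ‖x - y‖ * (n * M ^ (n - 2)) := by
        refine norm_sum_le_of_le _ fun i hi => ?_
        have hin := mem_range.mp hi
        calc _ ≤ ‖x - y‖ * (i * M ^ (i - 1)) * M ^ (n - 1 - i) :=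
              (norm_mul_le _ _).trans <| mul_le_mul ((norm_mul_le _ _).trans <|
                mul_le_mul_of_nonneg_left (norm_geom_sum₂_le hx hy i) (norm_nonneg _))
                ((norm_pow_le _ _).trans (pow_le_pow_left₀ (norm_nonneg _) hy _))
                (norm_nonneg _) (by positivity)
          _ ≤ ‖x - y‖ * (n * M ^ (n - 2)) := by
            rcases Nat.eq_zero_or_pos i with rfl | hi0
            · simp only [CharP.cast_eq_zero, zero_mul, mul_zero]; positivity
            · rw [mul_assoc, mul_assoc, ← pow_add, show i - 1 + (n - 1 - i) = n - 2 by omega]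
              gcongr
    _ = ‖x - y‖ * (n ^ 2 * M ^ (n - 2)) := by rw [sum_const, card_range, nsmul_eq_mul]; ring

end GeomSum

theorem norm_deriv_le_of_pow_mul_two_sub_eq {k : ℕ} (hk : 3 ≤ k) {α β : ℂ} (hne : α ≠ β)
    (heq : α ^ k * (2 - α) = β ^ k * (2 - β)) {M : ℝ} (hα : ‖α‖ ≤ M) (hβ : ‖β‖ ≤ M)
    (hM : 1 ≤ M) :
    ‖β‖ ^ (k - 1) * ‖2 * k - (k + 1) * β‖ ≤ ‖α - β‖ * (4 * k ^ 2 * M ^ (k - 1)) := by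
  set S : ℕ → ℂ := fun n => ∑ i ∈ range n, α ^ i * β ^ (n - 1 - i)
  have hS : S (k + 1) = 2 * S k := by
    have h : (S (k + 1) - 2 * S k) * (α - β) = 0 := by
      simp only [S, sub_mul, mul_assoc, geom_sum₂_mul]
      linear_combination -heq
    exact sub_eq_zero.mp ((mul_eq_zero.mp h).resolve_right (sub_ne_zero.mpr hne))
  have hderiv : β ^ (k - 1) * (2 * k - (k + 1) * β) =
      2 * -(S k - k * β ^ (k - 1)) + (S (k + 1) - (k + 1 : ℕ) * β ^ (k + 1 - 1)) := by
    obtain ⟨n, rfl⟩ : ∃ n, k = n + 1 := ⟨k - 1, by omega⟩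
    simp only [add_tsub_cancel_right, hS, pow_succ]
    push_cast
    ring
  have h1 := norm_geom_sum₂_sub_le hα hβ k
  have h2 := norm_geom_sum₂_sub_le hα hβ (k + 1)
  rw [show k + 1 - 2 = k - 1 by omega] at h2
  have hMk : M ^ (k - 2) ≤ M ^ (k - 1) := pow_le_pow_right₀ hM (by omega)
  have hk2 : ((k + 1 : ℕ) : ℝ) ^ 2 ≤ 2 * k ^ 2 := by
    have : (3 : ℝ) ≤ k := by exact_mod_cast hk
    push_cast; nlinarith
  calc ‖β‖ ^ (k - 1) * ‖2 * k - (k + 1) * β‖ = ‖β ^ (k - 1) * (2 * k - (k + 1) * β)‖ := by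
        rw [norm_mul, norm_pow]
    _ ≤ 2 * ‖S k - k * β ^ (k - 1)‖ + ‖S (k + 1) - (k + 1 : ℕ) * β ^ (k + 1 - 1)‖ := by
        rw [hderiv]
        refine (norm_add_le _ _).trans ?_
        rw [norm_mul, norm_neg, Complex.norm_two]
    _ ≤ 2 * (‖α - β‖ * (k ^ 2 * M ^ (k - 1))) + ‖α - β‖ * (2 * k ^ 2 * M ^ (k - 1)) := by
        gcongr
        · exact h1.trans (by gcongr)
        · exact h2.trans (by gcongr)
    _ = ‖α - β‖ * (4 * k ^ 2 * M ^ (k - 1)) := by ring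

theorem one_lt_pow_mul_two_sub {k : ℕ} (hk : 2 ≤ k) {r : ℝ} (h1 : 1 < r) (h2 : r < 3 / 2) :
    1 < r ^ k * (2 - r) := by
  have hk' : (2 : ℝ) ≤ k := by exact_mod_cast hk
  have hbern : 1 + k * (r - 1) ≤ r ^ k := one_add_mul_sub_le_pow (by linarith) k
  have hgap : 0 < (r - 1) * (k - 1 - k * (r - 1)) := mul_pos (by linarith) (by nlinarith)
  calc 1 < (1 + k * (r - 1)) * (2 - r) := by linear_combination hgap
    _ ≤ r ^ k * (2 - r) := by gcongr; linarith

theorem succ_lt_three_halves_pow {k : ℕ} (hk : 4 ≤ k) : (k : ℝ) + 1 < (3 / 2) ^ k := by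
  induction k, hk using Nat.le_induction with
  | base => norm_num
  | succ n hn ih =>
    have : (4 : ℝ) ≤ n := by exact_mod_cast hn
    push_cast
    rw [pow_succ]
    nlinarith

namespace fibPoly

variable {k : ℕ} {z : ℂ}

theorem pow_mul_two_sub_eq_one (h : (fibPoly k).IsRoot z) : z ^ k * (2 - z) = 1 := by
  have h0 : z ^ k - ∑ i ∈ range k, z ^ i = 0 := by simpa [fibPoly] using h.eq_zero
  linear_combination (1 - z) * h0 - geom_sum_mul z k

theorem norm_pow_mul_norm_two_sub_eq_one (h : (fibPoly k).IsRoot z) : ‖z‖ ^ k * ‖2 - z‖ = 1 := by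
  rw [← norm_pow, ← norm_mul, pow_mul_two_sub_eq_one h, norm_one]

theorem three_halves_le_norm (hk : 2 ≤ k) (h : (fibPoly k).IsRoot z) (h1 : 1 < ‖z‖) :
    3 / 2 ≤ ‖z‖ := by
  by_contra! h2
  have : ‖z‖ ^ k * (2 - ‖z‖) ≤ ‖z‖ ^ k * ‖2 - z‖ := by
    gcongr
    simpa using norm_sub_norm_le (2 : ℂ) z
  rw [norm_pow_mul_norm_two_sub_eq_one h] at this
  exact this.not_gt (one_lt_pow_mul_two_sub hk h1 h2)

theorem max_one_norm_pow_le (hk : 4 ≤ k) (h : (fibPoly k).IsRoot z) :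
    max 1 ‖z‖ ^ (k - 1) ≤ ‖z‖ ^ (k - 1) * ‖2 * k - (k + 1) * z‖ := by
  have hkey := norm_pow_mul_norm_two_sub_eq_one h
  have hk' : (4 : ℝ) ≤ k := by exact_mod_cast hk
  have hnorm_succ : ‖(k + 1 : ℂ)‖ = k + 1 := by exact_mod_cast Complex.norm_natCast (k + 1)
  rcases le_or_gt ‖z‖ 1 with hz | hz
  · have h3 : 1 / 3 ≤ ‖z‖ ^ (k - 1) := by
      have : ‖2 - z‖ ≤ 3 := (norm_sub_le _ _).trans (by norm_num; linarith)
      have : 1 / 3 ≤ ‖z‖ ^ k := by nlinarith [pow_nonneg (norm_nonneg z) k]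
      exact this.trans (pow_le_pow_of_le_one (norm_nonneg z) hz (Nat.sub_le k 1))
    have : 3 ≤ ‖2 * k - (k + 1) * z‖ := by
      have := norm_sub_norm_le (2 * k : ℂ) ((k + 1) * z)
      rw [norm_mul, norm_mul, hnorm_succ, Complex.norm_two, Complex.norm_natCast] at this
      nlinarith [norm_nonneg z]
    rw [max_eq_left hz, one_pow]
    nlinarith
  · have h32 := three_halves_le_norm (by omega) h hz
    have : (k + 1) * ‖2 - z‖ < 1 := by
      have := succ_lt_three_halves_pow hk
      have := pow_le_pow_left₀ (by norm_num) h32 k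
      nlinarith [norm_nonneg (2 - z)]
    have : 1 ≤ ‖2 * k - (k + 1) * z‖ := by
      have := norm_sub_norm_le (2 : ℂ) ((k + 1) * (2 - z))
      rw [norm_mul, hnorm_succ, Complex.norm_two,
        show (2 : ℂ) - (k + 1) * (2 - z) = -(2 * k - (k + 1) * z) by ring, norm_neg] at this
      linarith
    rw [max_eq_right hz.le]
    exact le_mul_of_one_le_right (by positivity) this

theorem inv_four_mul_sq_le_norm_sub (hk : 4 ≤ k) {α β : ℂ} (hα : (fibPoly k).IsRoot α)
    (hβ : (fibPoly k).IsRoot β) (hne : α ≠ β) : (4 * k ^ 2 : ℝ)⁻¹ ≤ ‖α - β‖ := by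
  wlog hle : ‖α‖ ≤ ‖β‖ generalizing α β
  · rw [norm_sub_rev]
    exact this hβ hα hne.symm (le_of_not_ge hle)
  set M := max 1 ‖β‖
  have hMpos : 0 < M ^ (k - 1) := pow_pos (lt_max_of_lt_left one_pos) _
  have hcore := norm_deriv_le_of_pow_mul_two_sub_eq (by omega) hne
    ((pow_mul_two_sub_eq_one hα).trans (pow_mul_two_sub_eq_one hβ).symm)
    (hle.trans (le_max_right _ _)) (le_max_right _ _) (le_max_left _ _)
  have := (max_one_norm_pow_le hk hβ).trans hcore
  rw [inv_le_iff_one_le_mul₀ (by positivity)]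
  nlinarith

end fibPoly

/-- For every integer `k ≥ 4` and any two distinct roots `α, β` of `f_k` in `ℂ`,
one has `|α − β| > 1/(k^(6.6) · (π/e)^k)`. -/
theorem fibPoly_root_separation (k : ℕ) (hk : 4 ≤ k) (α β : ℂ)
    (hα : (fibPoly k).IsRoot α) (hβ : (fibPoly k).IsRoot β) (hne : α ≠ β) :
    ‖α - β‖ > 1 / ((k : ℝ) ^ (6.6 : ℝ) * (π / Real.exp 1) ^ k) := by
  have hk' : (4 : ℝ) ≤ k := by exact_mod_cast hk
  have hpi : 1 ≤ (π / exp 1) ^ k :=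
    one_le_pow₀ ((one_le_div (exp_pos 1)).mpr (exp_one_lt_three.trans pi_gt_three).le)
  have hpow : (k : ℝ) ^ (6 : ℕ) ≤ k ^ (6.6 : ℝ) := by
    rw [← rpow_natCast]
    exact rpow_le_rpow_of_exponent_le (by linarith) (by norm_num)
  have hlt : 4 * (k : ℝ) ^ 2 < k ^ (6.6 : ℝ) * (π / exp 1) ^ k := by
    calc 4 * (k : ℝ) ^ 2 < k ^ (6 : ℕ) := by nlinarith [pow_le_pow_left₀ (by norm_num) hk' 4]
      _ ≤ k ^ (6.6 : ℝ) := hpow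
      _ ≤ k ^ (6.6 : ℝ) * (π / exp 1) ^ k := le_mul_of_one_le_right (by positivity) hpi
  rw [gt_iff_lt, one_div]
  exact (inv_strictAnti₀ (by positivity) hlt).trans_le
    (fibPoly.inv_four_mul_sq_le_norm_sub hk hα hβ hne)
end

section
/- For every integer k ≥ 2, the absolute value of the discriminant of the k-generalized Fibonacci polynomial f_k equals (2^(k+1) · k^k − (k+1)^(k+1)) / (k−1)^2. -/
open Polynomial

/-- The absolute value of the discriminant of a polynomial over `ℂ`.
For a monic polynomial `p` of degree `n` with roots `r_1, …, r_n` (with multiplicity)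
in `ℂ`, one has `|disc p| = ∏ i, |p'(r_i)|`, which we take as the definition. -/
noncomputable def absDisc (p : Polynomial ℂ) : ℝ :=
  (p.roots.map fun r => ‖p.derivative.eval r‖).prod

/-!
At a root `r` of `f = fibPoly k`, differentiating `(X - 1) * f = X ^ (k + 1) - 2 * X ^ k + 1` gives
`(r - 1) * f'(r) = (k + 1) * r ^ (k - 1) * (r - c)`, where `c = 2k/(k+1)` is the nonzero critical
point of the right-hand side. Since `f` is monic and splits, `∏ ‖r - z‖` over its roots is `‖f(z)‖`,
so taking norms and multiplying over the roots gives
`‖f(1)‖ * |disc f| = (k + 1) ^ k * ‖f(0)‖ ^ (k - 1) * ‖f(c)‖`, with `‖f(1)‖ = k - 1`, `‖f(0)‖ = 1`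
and `(k + 1) ^ k * (k - 1) * f(c) = (k + 1) ^ (k + 1) - 2 ^ (k + 1) * k ^ k`, a nonpositive number by
Bernoulli's inequality.
-/

theorem Polynomial.Splits.norm_eval_eq_prod_roots_of_monic {K : Type*} [NormedField K]
    {p : K[X]} (hsplit : p.Splits) (hp : p.Monic) (z : K) :
    ‖p.eval z‖ = (p.roots.map fun r => ‖r - z‖).prod := by
  rw [hsplit.eval_eq_prod_roots_of_monic hp]
  exact (map_multiset_prod (normHom : K →*₀ ℝ) _).trans (by simp [Multiset.map_map, norm_sub_rev])

theorem add_one_pow_succ_le_two_pow_succ_mul_pow (k : ℕ) :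
    ((k : ℝ) + 1) ^ (k + 1) ≤ 2 ^ (k + 1) * (k : ℝ) ^ k := by
  rcases Nat.eq_zero_or_pos k with rfl | hk
  · norm_num
  have hk_pos : (0 : ℝ) < k := by exact_mod_cast hk
  have hbern : (k : ℝ) ≤ (2 * k / (k + 1)) ^ (k + 1) := by
    have h := one_add_mul_le_pow (a := ((k : ℝ) - 1) / (k + 1)) (by
      rw [le_div_iff₀ (by positivity)]; linarith) (k + 1)
    rw [Nat.cast_succ, mul_div_cancel₀ _ (by positivity), add_sub_cancel,
      one_add_div (by positivity)] at h
    rwa [show (k : ℝ) + 1 + (k - 1) = 2 * k by ring] at h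
  rw [div_pow, le_div_iff₀ (by positivity), mul_pow, pow_succ (k : ℝ)] at hbern
  nlinarith [pow_pos hk_pos k]

theorem X_sub_one_mul_fibPoly (k : ℕ) : (X - 1) * fibPoly k = X ^ (k + 1) - 2 * X ^ k + 1 := by
  rw [fibPoly, mul_sub, mul_comm (X - 1) (∑ i ∈ _, _), geom_sum_mul]
  ring

theorem degree_geom_sum_X_lt {R : Type*} [Semiring R] (k : ℕ) :
    (∑ i ∈ Finset.range k, (X : R[X]) ^ i).degree < k := by
  refine (degree_sum_le _ _).trans_lt ?_
  rw [Finset.sup_lt_iff (by exact_mod_cast WithBot.bot_lt_coe k)]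
  intro i hi
  exact (degree_X_pow_le i).trans_lt (by exact_mod_cast Finset.mem_range.mp hi)

theorem monic_fibPoly (k : ℕ) : (fibPoly k).Monic :=
  monic_X_pow_sub (degree_geom_sum_X_lt k)

theorem natDegree_fibPoly (k : ℕ) : (fibPoly k).natDegree = k := by
  refine natDegree_eq_of_degree_eq_some ?_
  rw [fibPoly, degree_sub_eq_left_of_degree_lt, degree_X_pow]
  simpa only [degree_X_pow] using degree_geom_sum_X_lt k

theorem eval_one_fibPoly (k : ℕ) : (fibPoly k).eval 1 = 1 - k := by
  simp [fibPoly, eval_finsetSum]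

theorem norm_eval_one_fibPoly {k : ℕ} (hk : k ≠ 0) : ‖(fibPoly k).eval 1‖ = k - 1 := by
  have hk1 : (1 : ℝ) ≤ k := by exact_mod_cast Nat.one_le_iff_ne_zero.mpr hk
  rw [eval_one_fibPoly, norm_sub_rev, show (k : ℂ) - 1 = ((k - 1 : ℝ) : ℂ) by push_cast; rfl,
    Complex.norm_real, Real.norm_of_nonneg (by linarith)]

theorem sub_one_mul_eval_fibPoly (k : ℕ) (z : ℂ) :
    (z - 1) * (fibPoly k).eval z = z ^ (k + 1) - 2 * z ^ k + 1 := by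
  simpa using congrArg (eval z) (X_sub_one_mul_fibPoly k)

theorem eval_zero_fibPoly {k : ℕ} (hk : k ≠ 0) : (fibPoly k).eval 0 = -1 := by
  have h := sub_one_mul_eval_fibPoly k 0
  simp only [zero_sub, zero_pow hk, zero_pow (Nat.succ_ne_zero k)] at h
  linear_combination -h

theorem sub_one_mul_eval_derivative_fibPoly {k : ℕ} (hk : k ≠ 0) {c r : ℂ}
    (hc : (k + 1) * c = 2 * k) (hr : (fibPoly k).IsRoot r) :
    (r - 1) * (fibPoly k).derivative.eval r = (k + 1) * r ^ (k - 1) * (r - c) := by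
  have h : (r - 1) * (fibPoly k).derivative.eval r = (k + 1) * r ^ k - 2 * (k * r ^ (k - 1)) := by
    simpa [hr.eq_zero, derivative_X_pow] using
      congrArg (fun p => eval r (derivative p)) (X_sub_one_mul_fibPoly k)
  linear_combination h + r ^ (k - 1) * hc - (k + 1) * mul_pow_sub_one hk r

theorem eval_fibPoly_of_mul_eq {k : ℕ} {c : ℂ} (hc : (k + 1) * c = 2 * k) :
    (k + 1) ^ k * (k - 1) * (fibPoly k).eval c = (k + 1) ^ (k + 1) - 2 ^ (k + 1) * k ^ k := by
  calc (k + 1) ^ k * (k - 1) * (fibPoly k).eval c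
      = (k + 1) ^ (k + 1) * ((c - 1) * (fibPoly k).eval c) := by
        linear_combination -(k + 1) ^ k * (fibPoly k).eval c * hc
    _ = ((k + 1) * c) ^ k * ((k + 1) * c - 2 * (k + 1)) + (k + 1) ^ (k + 1) := by
        rw [sub_one_mul_eval_fibPoly, mul_pow]; ring
    _ = (k + 1) ^ (k + 1) - 2 ^ (k + 1) * k ^ k := by rw [hc]; ring

theorem mul_norm_eval_fibPoly_of_mul_eq {k : ℕ} (hk : k ≠ 0) {c : ℂ} (hc : (k + 1) * c = 2 * k) :
    ((k + 1) ^ k * (k - 1) : ℝ) * ‖(fibPoly k).eval c‖ = 2 ^ (k + 1) * k ^ k - (k + 1) ^ (k + 1) := by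
  have hk1 : (1 : ℝ) ≤ k := by exact_mod_cast Nat.one_le_iff_ne_zero.mpr hk
  have h : (((k + 1) ^ k * (k - 1) : ℝ) : ℂ) * (fibPoly k).eval c =
      (((k + 1) ^ (k + 1) - 2 ^ (k + 1) * k ^ k : ℝ) : ℂ) := by
    push_cast
    exact eval_fibPoly_of_mul_eq hc
  have hneg := sub_nonpos.mpr (add_one_pow_succ_le_two_pow_succ_mul_pow k)
  have hnorm := congrArg norm h
  rw [norm_mul, Complex.norm_real, Complex.norm_real, Real.norm_of_nonpos hneg,
    Real.norm_of_nonneg (mul_nonneg (by positivity) (by linarith))] at hnorm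
  linear_combination hnorm

theorem norm_eval_one_mul_absDisc_fibPoly {k : ℕ} (hk : k ≠ 0) {c : ℂ} (hc : (k + 1) * c = 2 * k) :
    ‖(fibPoly k).eval 1‖ * absDisc (fibPoly k) =
      (k + 1) ^ k * ‖(fibPoly k).eval 0‖ ^ (k - 1) * ‖(fibPoly k).eval c‖ := by
  have hroots := (IsAlgClosed.splits (fibPoly k)).norm_eval_eq_prod_roots_of_monic (monic_fibPoly k)
  have hnorm (r : ℂ) (hr : r ∈ (fibPoly k).roots) :
      ‖r - 1‖ * ‖(fibPoly k).derivative.eval r‖ = (k + 1) * ‖r - 0‖ ^ (k - 1) * ‖r - c‖ := by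
    rw [← norm_mul, sub_one_mul_eval_derivative_fibPoly hk hc (isRoot_of_mem_roots hr), norm_mul,
      norm_mul, norm_pow, sub_zero, ← Nat.cast_succ, Complex.norm_natCast, Nat.cast_succ]
  rw [hroots, hroots, hroots, absDisc, ← Multiset.prod_map_mul, Multiset.map_congr rfl hnorm,
    Multiset.prod_map_mul, Multiset.prod_map_mul, Multiset.map_const', Multiset.prod_replicate,
    Multiset.prod_map_pow, IsAlgClosed.card_roots_eq_natDegree, natDegree_fibPoly]

/-- For every integer `k ≥ 2`, the absolute value of the discriminant of the
`k`-generalized Fibonacci polynomial `f_k` equals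
`(2^(k+1) · k^k − (k+1)^(k+1)) / (k−1)^2`. -/
theorem absDisc_fibPoly (k : ℕ) (hk : 2 ≤ k) :
    absDisc (fibPoly k) =
      (2 ^ (k + 1) * (k : ℝ) ^ k - ((k : ℝ) + 1) ^ (k + 1)) / ((k : ℝ) - 1) ^ 2 := by
  have hk0 : k ≠ 0 := by omega
  have hk1 : (1 : ℝ) < k := by exact_mod_cast hk
  obtain ⟨c, hc⟩ : ∃ c : ℂ, (k + 1) * c = 2 * k :=
    ⟨2 * k / (k + 1), mul_div_cancel₀ _ (by exact_mod_cast k.succ_ne_zero)⟩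
  have hdisc := norm_eval_one_mul_absDisc_fibPoly hk0 hc
  rw [norm_eval_one_fibPoly hk0, eval_zero_fibPoly hk0, norm_neg, norm_one, one_pow, mul_one] at hdisc
  rw [eq_div_iff (by positivity)]
  linear_combination (k - 1 : ℝ) * hdisc + mul_norm_eval_fibPoly_of_mul_eq hk0 hc
end

section
/- For every integer k ≥ 2, the k-generalized Fibonacci polynomial f_k has exactly one root α_k in ℂ with |α_k| ≥ 1; this root is real and satisfies 2 − 1/2^(k−1) < α_k < 2, and every other root of f_k has absolute value strictly less than 1. -/
/-!
Multiplying by `X - 1` turns `f_k(z) = 0` into `z ^ k * (2 - z) = 1`. For a root with `‖z‖ ≥ 1`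
the triangle inequality gives `‖z‖ ^ k * (2 - ‖z‖) ≤ 1`, while `‖z‖ ^ k ≤ ∑ ‖z‖ ^ i` gives the
reverse inequality; so `‖2 - z‖ = 2 - ‖z‖`, which forces `z` to be a positive real. On the other
hand `x ↦ ∑_{i<k} x ^ (i - k)` is strictly decreasing on `(0, ∞)`, so `f_k` has only one positive
root. Since `f_k(2) = 1` and, by Bernoulli's inequality, `f_k(2 - 1 / 2 ^ (k - 1)) < 0`, the
intermediate value theorem puts that root between these two points.
-/

open Polynomial

open Finset

theorem sub_one_mul_pow_sub_geom_sum {R : Type*} [CommRing R] (x : R) (k : ℕ) :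
    (x - 1) * (x ^ k - ∑ i ∈ range k, x ^ i) = x ^ k * (x - 2) + 1 := by
  linear_combination -(geom_sum_mul x k)

theorem fibPoly_isRoot_iff {k : ℕ} {z : ℂ} :
    (fibPoly k).IsRoot z ↔ z ^ k = ∑ i ∈ range k, z ^ i := by
  simp [fibPoly, sub_eq_zero]

theorem fibPoly_isRoot_ofReal_iff {k : ℕ} {x : ℝ} :
    (fibPoly k).IsRoot (x : ℂ) ↔ x ^ k = ∑ i ∈ range k, x ^ i := by
  rw [fibPoly_isRoot_iff]; norm_cast

section OrderedField

variable {K : Type*} [Field K] [LinearOrder K] [IsStrictOrderedRing K] {k : ℕ} {x y : K}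

theorem geom_sum_lt_pow_of_lt_of_pow_eq_geom_sum (hx : 0 < x) (hxy : x < y)
    (hroot : x ^ k = ∑ i ∈ range k, x ^ i) : ∑ i ∈ range k, y ^ i < y ^ k := by
  have hk : k ≠ 0 := by rintro rfl; simp at hroot
  have ht : 1 < y / x := (one_lt_div hx).2 hxy
  have hy : y = y / x * x := by field_simp
  calc ∑ i ∈ range k, y ^ i = ∑ i ∈ range k, (y / x) ^ i * x ^ i := by
        simp_rw [← mul_pow, ← hy]
    _ < ∑ i ∈ range k, (y / x) ^ k * x ^ i := by
        refine sum_lt_sum_of_nonempty (nonempty_range_iff.2 hk) fun i hi => ?_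
        exact mul_lt_mul_of_pos_right (pow_lt_pow_right₀ ht (mem_range.1 hi)) (pow_pos hx i)
    _ = y ^ k := by rw [← mul_sum, ← hroot, ← mul_pow, ← hy]

theorem eq_of_pow_eq_geom_sum (hx : 0 < x) (hy : 0 < y)
    (hxk : x ^ k = ∑ i ∈ range k, x ^ i) (hyk : y ^ k = ∑ i ∈ range k, y ^ i) : x = y := by
  rcases lt_trichotomy x y with h | h | h
  · exact absurd hyk (geom_sum_lt_pow_of_lt_of_pow_eq_geom_sum hx h hxk).ne'
  · exact h
  · exact absurd hxk (geom_sum_lt_pow_of_lt_of_pow_eq_geom_sum hy h hyk).ne'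

end OrderedField

theorem two_pow_lt_two_sub_one_div_two_pow_pow {n : ℕ} (hn : 1 ≤ n) :
    (2 : ℝ) ^ n < (2 - 1 / 2 ^ n) ^ (n + 1) := by
  have hbern := one_add_mul_self_lt_rpow_one_add (s := -(1 / 2 ^ (n + 1))) (p := n + 1)
    (by rw [neg_le_neg_iff, div_le_one (by positivity)]; exact one_le_pow₀ one_le_two)
    (neg_ne_zero.2 (by positivity)) (by norm_cast; omega)
  rw [← Nat.cast_succ, Real.rpow_natCast] at hbern
  have hn2 : (n : ℝ) + 1 ≤ 2 ^ n := by exact_mod_cast Nat.lt_two_pow_self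
  calc (2 : ℝ) ^ n ≤ 2 ^ (n + 1) * (1 + (n + 1 : ℕ) * -(1 / 2 ^ (n + 1))) := by
        push_cast; rw [pow_succ]; field_simp; linarith
    _ < 2 ^ (n + 1) * (1 + -(1 / 2 ^ (n + 1))) ^ (n + 1) := by gcongr
    _ = (2 - 1 / 2 ^ n) ^ (n + 1) := by
        rw [← mul_pow]; congr 1; rw [pow_succ]; field_simp; ring

theorem Complex.eq_coe_norm_of_norm_sub_eq {z : ℂ} {x : ℝ} (h : ‖(x : ℂ) - z‖ = x - ‖z‖) :
    z = ‖z‖ := by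
  have hx : 0 ≤ x := by linarith [norm_nonneg ((x : ℂ) - z), norm_nonneg z]
  have hray : SameRay ℝ z (x : ℂ) := by
    have : SameRay ℝ z ((x : ℂ) - z) := by
      rw [sameRay_iff_norm_add, add_sub_cancel, h, Complex.norm_of_nonneg hx]; ring
    simpa using (SameRay.refl z).add_right this
  rcases Complex.sameRay_iff.1 hray with rfl | hx0 | harg
  · simp
  · rw [hx0, zero_sub, norm_neg, Complex.ofReal_eq_zero.1 hx0, zero_sub] at h
    rw [norm_eq_zero.1 (by linarith : ‖z‖ = 0)]; simp
  · rw [Complex.arg_ofReal_of_nonneg hx, Complex.arg_eq_zero_iff_zero_le] at harg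
    exact Complex.eq_coe_norm_of_nonneg harg

theorem one_lt_two_sub_one_div_two_pow {n : ℕ} (hn : 1 ≤ n) : (1 : ℝ) < 2 - 1 / 2 ^ n := by
  have : (1 : ℝ) / 2 ^ n < 1 := (div_lt_one (by positivity)).2 (one_lt_pow₀ one_lt_two (by omega))
  linarith

theorem exists_pow_eq_geom_sum_mem_Ioo {n : ℕ} (hn : 1 ≤ n) :
    ∃ a ∈ Set.Ioo (2 - 1 / 2 ^ n : ℝ) 2, a ^ (n + 1) = ∑ i ∈ range (n + 1), a ^ i := by
  set c : ℝ := 2 - 1 / 2 ^ n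
  set F : ℝ → ℝ := fun x => x ^ (n + 1) - ∑ i ∈ range (n + 1), x ^ i
  have hc1 : 1 < c := one_lt_two_sub_one_div_two_pow hn
  have hc2 : c < 2 := by simp only [c]; linarith [show (0 : ℝ) < 1 / 2 ^ n by positivity]
  have hFc : F c < 0 := by
    have hprod : (c - 1) * F c < 0 := by
      rw [sub_one_mul_pow_sub_geom_sum, show c - 2 = -(1 / 2 ^ n) by simp only [c]; ring]
      have := two_pow_lt_two_sub_one_div_two_pow_pow hn
      field_simp
      linarith
    exact neg_of_mul_neg_right hprod (by linarith)
  have hF2 : 0 < F 2 := by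
    have := sub_one_mul_pow_sub_geom_sum (2 : ℝ) (n + 1)
    norm_num at this
    simp only [F, this, zero_lt_one]
  have hF : Continuous F := by fun_prop
  obtain ⟨a, ha, hFa⟩ := intermediate_value_Ioo hc2.le hF.continuousOn ⟨hFc, hF2⟩
  exact ⟨a, ha, sub_eq_zero.1 hFa⟩

theorem fibPoly_root_eq_coe_norm {k : ℕ} {z : ℂ} (hz : (fibPoly k).IsRoot z) (h1 : 1 ≤ ‖z‖) :
    z = ‖z‖ := by
  set r := ‖z‖
  rw [fibPoly_isRoot_iff] at hz
  have hprod : z ^ k * (2 - z) = 1 := by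
    linear_combination sub_one_mul_pow_sub_geom_sum z k - (z - 1) * hz
  have hnorm : r ^ k * ‖2 - z‖ = 1 := by
    rw [← norm_pow, ← norm_mul, hprod, norm_one]
  have hsum : r ^ k ≤ ∑ i ∈ range k, r ^ i := by
    calc r ^ k = ‖∑ i ∈ range k, z ^ i‖ := by rw [← hz, norm_pow]
      _ ≤ ∑ i ∈ range k, r ^ i := by
        simpa only [norm_pow] using norm_sum_le (range k) (z ^ ·)
  have hlower : 1 ≤ r ^ k * (2 - r) := by
    have := sub_one_mul_pow_sub_geom_sum r k
    nlinarith [mul_nonpos_of_nonneg_of_nonpos (sub_nonneg.2 h1) (sub_nonpos.2 hsum)]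
  have hupper : r ^ k * (2 - r) ≤ 1 := by
    rw [← hnorm]
    gcongr
    simpa using norm_sub_norm_le (2 : ℂ) z
  have hrk : 0 < r ^ k := by positivity
  have h2z : ‖((2 : ℝ) : ℂ) - z‖ = 2 - r := by
    refine mul_left_cancel₀ hrk.ne' ?_
    push_cast
    linarith
  exact Complex.eq_coe_norm_of_norm_sub_eq h2z

/-- For every integer `k ≥ 2`, the polynomial `f_k` has exactly one root in `ℂ` of
absolute value `≥ 1`; this root is real, lies strictly between `2 − 1/2^(k−1)` and `2`,
and every other root of `f_k` has absolute value strictly less than `1`. -/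
theorem fibPoly_dominant_root (k : ℕ) (hk : 2 ≤ k) :
    ∃ a : ℝ, (fibPoly k).IsRoot (a : ℂ) ∧
      2 - 1 / 2 ^ (k - 1) < a ∧ a < 2 ∧
      (∀ β : ℂ, (fibPoly k).IsRoot β → β ≠ (a : ℂ) → ‖β‖ < 1) ∧
      (∃! α : ℂ, (fibPoly k).IsRoot α ∧ 1 ≤ ‖α‖) := by
  obtain ⟨n, rfl⟩ : ∃ n, k = n + 1 := ⟨k - 1, by omega⟩
  rw [Nat.add_sub_cancel]
  obtain ⟨a, ⟨hca, ha2⟩, ha⟩ := exists_pow_eq_geom_sum_mem_Ioo (n := n) (by omega)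
  have ha1 : 1 < a := (one_lt_two_sub_one_div_two_pow (by omega)).trans hca
  have eq_a_of_one_le_norm : ∀ z : ℂ, (fibPoly (n + 1)).IsRoot z → 1 ≤ ‖z‖ → z = a := by
    intro z hz hz1
    have hz_real := fibPoly_root_eq_coe_norm hz hz1
    rw [hz_real, fibPoly_isRoot_ofReal_iff] at hz
    rw [hz_real]
    exact congrArg _ (eq_of_pow_eq_geom_sum (by linarith) (by linarith) hz ha)
  refine ⟨a, fibPoly_isRoot_ofReal_iff.2 ha, hca, ha2,
    fun z hz hne => lt_of_not_ge fun hz1 => hne (eq_a_of_one_le_norm z hz hz1), a,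
    ⟨fibPoly_isRoot_ofReal_iff.2 ha, ?_⟩, fun z ⟨hz, hz1⟩ => eq_a_of_one_le_norm z hz hz1⟩
  rw [Complex.norm_real, Real.norm_of_nonneg (by linarith)]
  exact ha1.le
end

section
/- For every integer k ≥ 100, the absolute value of the discriminant of h_k(X) = X^(k+1) − 2X + 1 satisfies |disc(h_k)| = 2^(k+1) · k^k − (k+1)^(k+1) > 2^k · k^k. -/
open Polynomial

namespace Polynomial

section Semiring

variable {R : Type*} [Semiring R] {n : ℕ} {a b : R}

theorem natDegree_X_pow_add_C_mul_X_add_C [Nontrivial R] (hn : n ≠ 0) :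
    (X ^ (n + 1) + C a * X + C b).natDegree = n + 1 := by
  compute_degree!
  simp [hn]

theorem monic_X_pow_add_C_mul_X_add_C (hn : n ≠ 0) : (X ^ (n + 1) + C a * X + C b).Monic := by
  monicity!
  simp [hn]

end Semiring

theorem eval_derivative_X_pow_add_C_mul_X_add_C_mul_of_isRoot {R : Type*} [CommRing R] {n : ℕ}
    {a b r : R} (hr : (X ^ (n + 1) + C a * X + C b).IsRoot r) :
    (X ^ (n + 1) + C a * X + C b).derivative.eval r * r = -(n * a) * r - (n + 1) * b := by
  simp only [IsRoot, eval_add, eval_pow, eval_mul, eval_X, eval_C] at hr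
  simp only [derivative_add, derivative_X_pow, derivative_C_mul_X, derivative_C, eval_add,
    eval_mul, eval_pow, eval_X, eval_C, eval_zero]
  push_cast
  linear_combination (n + 1 : R) * hr

variable {K : Type*} [Field K]

theorem Splits.prod_roots_mul_sub {p : K[X]} (hp : p.Splits) (hm : p.Monic) {u : K} (hu : u ≠ 0)
    (v : K) : (p.roots.map fun r => u * r - v).prod = (-u) ^ p.natDegree * p.eval (v / u) := by
  rw [hp.eval_eq_prod_roots_of_monic hm, hp.natDegree_eq_card_roots, ← Multiset.prod_replicate,
    ← Multiset.map_const', ← Multiset.prod_map_mul]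
  refine congrArg _ (Multiset.map_congr rfl fun r _ => ?_)
  field_simp
  ring

theorem pow_mul_eval_X_pow_add_C_mul_X_add_C_div {n : ℕ} {a : K} (hn : (n : K) ≠ 0) (ha : a ≠ 0)
    (b : K) : (n * a) ^ (n + 1) * (X ^ (n + 1) + C a * X + C b).eval ((n + 1) * b / -(n * a)) =
      (-1) ^ (n + 1) * (((n + 1) ^ (n + 1) * b ^ n + (-1) ^ n * n ^ n * a ^ (n + 1)) * b) := by
  have hc : n * a * ((n + 1) * b / -(n * a)) = -((n + 1) * b) := by field_simp
  have hsign : (-1 : K) ^ n * (-1) ^ n = 1 := by rw [← mul_pow]; simp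
  generalize (n + 1) * b / -(n * a) = c at hc ⊢
  calc _ = (n * a * c) ^ (n + 1) + (n * a) ^ n * a * (n * a * c + n * b) := by
        simp only [eval_add, eval_pow, eval_mul, eval_X, eval_C]; ring
    _ = _ := by
        rw [hc, neg_pow, mul_pow ((n : K) + 1) b]
        linear_combination ((n : K) ^ n * a ^ (n + 1) * b) * hsign

/-- Classical discriminant formula for the trinomial `X ^ (n + 1) + a X + b`, in the form
`∏ p'(r)` over its roots. -/
theorem prod_roots_eval_derivative_X_pow_add_C_mul_X_add_C {n : ℕ} (hn : (n : K) ≠ 0)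
    {a b : K} (ha : a ≠ 0) (hb : b ≠ 0) (hsplit : (X ^ (n + 1) + C a * X + C b).Splits) :
    ((X ^ (n + 1) + C a * X + C b).roots.map fun r =>
        (X ^ (n + 1) + C a * X + C b).derivative.eval r).prod =
      (n + 1) ^ (n + 1) * b ^ n + (-1) ^ n * n ^ n * a ^ (n + 1) := by
  set p := X ^ (n + 1) + C a * X + C b
  have hn0 : n ≠ 0 := by rintro rfl; simp at hn
  have hdeg : p.natDegree = n + 1 := natDegree_X_pow_add_C_mul_X_add_C hn0
  have hm : p.Monic := monic_X_pow_add_C_mul_X_add_C hn0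
  have hprod : (-1) ^ (n + 1) * p.roots.prod = b := by
    rw [← hdeg, ← hsplit.coeff_zero_eq_prod_roots_of_monic hm]; simp [p]
  -- At a root, `r p'(r)` is affine in `r`, so `∏ r p'(r)` is a multiple of `p` at the zero of
  -- that affine map.
  have key : (p.roots.map fun r => p.derivative.eval r).prod * p.roots.prod =
      (n * a) ^ (n + 1) * p.eval ((n + 1) * b / -(n * a)) := by
    have h := hsplit.prod_roots_mul_sub hm (neg_ne_zero.2 (mul_ne_zero hn ha)) ((n + 1) * b)
    rw [neg_neg, hdeg] at h
    rw [← h, ← congrArg Multiset.prod (Multiset.map_id' p.roots), ← Multiset.prod_map_mul]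
    exact congrArg _ <| Multiset.map_congr rfl fun r hr =>
      eval_derivative_X_pow_add_C_mul_X_add_C_mul_of_isRoot (isRoot_of_mem_roots hr)
  rw [pow_mul_eval_X_pow_add_C_mul_X_add_C_div hn ha] at key
  apply mul_right_cancel₀ hb
  calc _ = (-1) ^ (n + 1) * ((p.roots.map fun r => p.derivative.eval r).prod * p.roots.prod) := by
        rw [← hprod]; ring
    _ = _ := by rw [key, ← mul_assoc, ← pow_add, Even.neg_one_pow ⟨n + 1, rfl⟩, one_mul]

end Polynomial

theorem absDisc_eq_norm_prod (p : ℂ[X]) :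
    absDisc p = ‖(p.roots.map fun r => p.derivative.eval r).prod‖ :=
  Multiset.prod_hom' _ (normHom : ℂ →*₀ ℝ) _

theorem absDisc_X_pow_sub_two_mul_X_add_one {k : ℕ} (hk : k ≠ 0) :
    absDisc (X ^ (k + 1) - 2 * X + 1) = |((k : ℝ) + 1) ^ (k + 1) - 2 ^ (k + 1) * (k : ℝ) ^ k| := by
  have hpoly : (X ^ (k + 1) - 2 * X + 1 : ℂ[X]) = X ^ (k + 1) + C (-2) * X + C 1 := by
    simp only [map_neg, C_ofNat, map_one]; ring
  have hsign : (-1 : ℂ) ^ k * (-2) ^ (k + 1) = -2 ^ (k + 1) := by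
    rw [neg_pow (2 : ℂ), ← mul_assoc, ← pow_add, Odd.neg_one_pow ⟨k, by ring⟩, neg_one_mul]
  rw [absDisc_eq_norm_prod, hpoly, prod_roots_eval_derivative_X_pow_add_C_mul_X_add_C
    (Nat.cast_ne_zero.2 hk) (by norm_num) one_ne_zero (IsAlgClosed.splits _), ← Real.norm_eq_abs,
    ← Complex.norm_real]
  congr 1
  push_cast
  linear_combination (k : ℂ) ^ k * hsign

theorem three_mul_add_one_lt_two_pow {k : ℕ} (hk : 4 ≤ k) : 3 * (k + 1) < 2 ^ k := by
  induction k, hk using Nat.le_induction with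
  | base => norm_num
  | succ n _ ih => rw [pow_succ]; omega

theorem add_one_pow_succ_lt_two_pow_mul_pow {k : ℕ} (hk : 4 ≤ k) :
    ((k : ℝ) + 1) ^ (k + 1) < 2 ^ k * (k : ℝ) ^ k := by
  have hk1 : (1 + (k : ℝ)⁻¹) * k = k + 1 := by
    rw [add_mul, one_mul, inv_mul_cancel₀ (by positivity)]
  have h3 : (3 : ℝ) * (k + 1) < 2 ^ k := by exact_mod_cast three_mul_add_one_lt_two_pow hk
  calc ((k : ℝ) + 1) ^ (k + 1) = (k + 1) * (1 + (k : ℝ)⁻¹) ^ k * (k : ℝ) ^ k := by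
        rw [mul_assoc, ← mul_pow, hk1, pow_succ, mul_comm]
    _ ≤ (k + 1) * Real.exp 1 * (k : ℝ) ^ k := by gcongr; exact Real.one_add_inv_pow_le_exp
    _ < (k + 1) * 3 * (k : ℝ) ^ k := by gcongr; exact Real.exp_one_lt_three
    _ < 2 ^ k * (k : ℝ) ^ k := by gcongr; linarith

/-- For every integer `k ≥ 100`, the absolute value of the discriminant of
`h_k(X) = X^(k+1) − 2X + 1` satisfies
`|disc(h_k)| = 2^(k+1)·k^k − (k+1)^(k+1) > 2^k·k^k`. -/
theorem absDisc_hPoly (k : ℕ) (hk : 100 ≤ k) :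
    absDisc (X ^ (k + 1) - 2 * X + 1) =
        2 ^ (k + 1) * (k : ℝ) ^ k - ((k : ℝ) + 1) ^ (k + 1) ∧
      2 ^ (k + 1) * (k : ℝ) ^ k - ((k : ℝ) + 1) ^ (k + 1) > 2 ^ k * (k : ℝ) ^ k := by
  have hlt := add_one_pow_succ_lt_two_pow_mul_pow (k := k) (by omega)
  have hpos : 0 < 2 ^ k * (k : ℝ) ^ k := by positivity
  have hgap : 2 ^ k * (k : ℝ) ^ k < 2 ^ (k + 1) * (k : ℝ) ^ k - ((k : ℝ) + 1) ^ (k + 1) := by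
    rw [pow_succ (2 : ℝ)]; linarith
  refine ⟨?_, hgap⟩
  rw [absDisc_X_pow_sub_two_mul_X_add_one (by omega), abs_of_neg (by linarith), neg_sub]
end
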